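/- arXiv:2205.11313 — 10 statements merged into one kernel-verified Lean document; each statement's English description precedes it below -/
import Mathlib

section
/- (Necessity direction of Myerson's lemma for single-item auctions.) If a deterministic single-item auction mechanism is truthful, then its allocation rule is monotone: whenever bidder i wins under bid vector b, and b' agrees with b in all coordinates except that b'_i > b_i, bidder i also wins under b'. -/
/-!
Suppose bidder `i` wins at `b` but loses at `b'`, which raises only `i`'s bid. Individual
rationality at value `b i` gives `p b i ≤ b i < b' i`, so a bidder of value `b' i` who bids
`b i` instead earns `b' i - p b i > 0`, more than the utility `0` of bidding truthfully.
-/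

section Utility

variable {ι : Type*} [DecidableEq ι]

def utility (A : (ι → ℝ) → Option ι) (p : (ι → ℝ) → ι → ℝ) (b : ι → ℝ) (i : ι) (v : ℝ) : ℝ :=
  if A b = some i then v - p b i else 0

variable {A : (ι → ℝ) → Option ι} {p : (ι → ℝ) → ι → ℝ} {b b' : ι → ℝ} {i : ι} {v : ℝ}

theorem utility_of_wins (h : A b = some i) : utility A p b i v = v - p b i := if_pos h

theorem utility_of_not_wins (h : A b ≠ some i) : utility A p b i v = 0 := if_neg h

theorem wins_of_wins_of_lt (hwin : A b = some i) (hrational : 0 ≤ utility A p b i (b i))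
    (hincentive : utility A p b i (b' i) ≤ utility A p b' i (b' i)) (hlt : b i < b' i) :
    A b' = some i := by
  by_contra hlose
  rw [utility_of_wins hwin] at hrational hincentive
  rw [utility_of_not_wins hlose] at hincentive
  linarith

end Utility

theorem truthful_implies_monotone_general
    (n : ℕ) (A : (Fin n → ℝ) → Option (Fin n))
    (p : (Fin n → ℝ) → Fin n → ℝ)
    -- truthfulness: bidding one's true value maximizes utility, and
    -- a truthtelling bidder has nonnegative utility
    (htruthful : ∀ (i : Fin n) (v : ℝ), 0 ≤ v → ∀ b : Fin n → ℝ, (∀ j, 0 ≤ b j) →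
      (∀ x : ℝ, 0 ≤ x →
        (if A (Function.update b i x) = some i then v - p (Function.update b i x) i else 0) ≤
        (if A (Function.update b i v) = some i then v - p (Function.update b i v) i else 0)) ∧
      0 ≤ (if A (Function.update b i v) = some i then v - p (Function.update b i v) i else 0)) :
    -- monotonicity of the allocation rule
    ∀ b b' : Fin n → ℝ, (∀ j, 0 ≤ b j) → (∀ j, 0 ≤ b' j) →
      ∀ i : Fin n, A b = some i → (∀ j, j ≠ i → b' j = b j) → b i < b' i →
        A b' = some i := by
  intro b b' hb hb' i hwin hagree hlt
  have hupdate : Function.update b i (b' i) = b' :=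
    Function.update_eq_iff.mpr ⟨rfl, fun j hj => (hagree j hj).symm⟩
  have hrational : 0 ≤ utility A p b i (b i) := by
    have h := (htruthful i (b i) (hb i) b hb).2
    rwa [Function.update_eq_self] at h
  have hincentive : utility A p b i (b' i) ≤ utility A p b' i (b' i) := by
    have h := (htruthful i (b' i) (hb' i) b hb).1 (b i) (hb i)
    rwa [Function.update_eq_self, hupdate] at h
  exact wins_of_wins_of_lt hwin hrational hincentive hlt

/-- Necessity direction of Myerson's lemma for single-item auctions:
a truthful deterministic mechanism has a monotone allocation rule. -/
theorem truthful_implies_monotone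
    (n : ℕ) (A : (Fin n → ℝ) → Option (Fin n))
    (p : (Fin n → ℝ) → Fin n → ℝ)
    -- payments are nonnegative
    (hp_nonneg : ∀ b : Fin n → ℝ, (∀ j, 0 ≤ b j) → ∀ i, 0 ≤ p b i)
    -- every non-winner pays 0
    (hp_loser : ∀ b : Fin n → ℝ, (∀ j, 0 ≤ b j) → ∀ i, A b ≠ some i → p b i = 0)
    -- truthfulness: bidding one's true value maximizes utility, and
    -- a truthtelling bidder has nonnegative utility
    (htruthful : ∀ (i : Fin n) (v : ℝ), 0 ≤ v → ∀ b : Fin n → ℝ, (∀ j, 0 ≤ b j) →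
      (∀ x : ℝ, 0 ≤ x →
        (if A (Function.update b i x) = some i then v - p (Function.update b i x) i else 0) ≤
        (if A (Function.update b i v) = some i then v - p (Function.update b i v) i else 0)) ∧
      0 ≤ (if A (Function.update b i v) = some i then v - p (Function.update b i v) i else 0)) :
    -- monotonicity of the allocation rule
    ∀ b b' : Fin n → ℝ, (∀ j, 0 ≤ b j) → (∀ j, 0 ≤ b' j) →
      ∀ i : Fin n, A b = some i → (∀ j, j ≠ i → b' j = b j) → b i < b' i →
        A b' = some i :=
  truthful_implies_monotone_general n A p htruthful
end

section
/- (Sufficiency direction of Myerson's lemma for single-item auctions.) Let A be a monotone allocation rule for a single-item auction: whenever bidder i wins under bid vector b and b' agrees with b except that b'_i > b_i, bidder i also wins under b'. Define the payment rule in which every non-winner pays 0 and the winner i under bid vector b pays the threshold bid theta_i(b_{-i}) = inf{ x >= 0 : i wins when bidding x against the other bids b_{-i} }. Then the resulting mechanism is truthful: for every bidder i, every value v_i >= 0, and all bids of the others, bidding b_i = v_i maximizes bidder i's utility, and every truthtelling bidder has nonnegative utility. -/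
/-!
Once the other bids are fixed, bidder `i`'s payment when winning is the threshold `θ`, which does
not depend on `i`'s own bid. So every bid yields utility `v - θ` (when it wins) or `0`. Truthful
bidding wins whenever `v > θ` by monotonicity, and it loses whenever `v < θ`, because winning
with a bid of at most `v` would put `θ ≤ v`. Hence truthful bidding always obtains
`max (v - θ) 0`.
-/

open Function

namespace SingleItemAuction

variable {ι : Type*} [DecidableEq ι]

def MonotoneAllocation (A : (ι → ℝ) → Option ι) : Prop :=
  ∀ b b' : ι → ℝ, ∀ i : ι, A b = some i → (∀ j, j ≠ i → b' j = b j) → b i < b' i → A b' = some i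

def winningBids (A : (ι → ℝ) → Option ι) (b : ι → ℝ) (i : ι) : Set ℝ :=
  {x | 0 ≤ x ∧ A (update b i x) = some i}

noncomputable def threshold (A : (ι → ℝ) → Option ι) (b : ι → ℝ) (i : ι) : ℝ :=
  sInf (winningBids A b i)

def HasThresholdPayments (A : (ι → ℝ) → Option ι) (p : (ι → ℝ) → ι → ℝ) : Prop :=
  ∀ b i, p b i = if A b = some i then threshold A b i else 0

def utility (A : (ι → ℝ) → Option ι) (p : (ι → ℝ) → ι → ℝ) (v : ℝ) (b : ι → ℝ) (i : ι) : ℝ :=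
  if A b = some i then v - p b i else 0

variable {A : (ι → ℝ) → Option ι} {p : (ι → ℝ) → ι → ℝ} {b : ι → ℝ} {i : ι} {v x : ℝ}

theorem MonotoneAllocation.wins_update_of_lt (hA : MonotoneAllocation A)
    (hx : A (update b i x) = some i) (hxv : x < v) : A (update b i v) = some i :=
  hA _ _ i hx (fun j hj => by simp [hj]) (by simpa using hxv)

theorem threshold_update : threshold A (update b i x) i = threshold A b i := by
  simp [threshold, winningBids]

theorem threshold_le_of_wins (hv : 0 ≤ v) (hwin : A (update b i v) = some i) :
    threshold A b i ≤ v :=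
  csInf_le ⟨0, fun _ hy => hy.1⟩ ⟨hv, hwin⟩

theorem le_threshold_of_loses (hA : MonotoneAllocation A) (hx : 0 ≤ x)
    (hxwin : A (update b i x) = some i) (hlose : A (update b i v) ≠ some i) :
    v ≤ threshold A b i :=
  le_csInf ⟨x, hx, hxwin⟩ fun _ hy =>
    le_of_not_gt fun hyv => hlose (hA.wins_update_of_lt hy.2 hyv)

theorem HasThresholdPayments.utility_update (hp : HasThresholdPayments A p) :
    utility A p v (update b i x) i =
      if A (update b i x) = some i then v - threshold A b i else 0 := by
  rw [utility, hp]
  split_ifs <;> simp [threshold_update]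

theorem HasThresholdPayments.utility_truthful_nonneg (hp : HasThresholdPayments A p)
    (hv : 0 ≤ v) : 0 ≤ utility A p v (update b i v) i := by
  rw [hp.utility_update]
  split_ifs with hwin
  · linarith [threshold_le_of_wins hv hwin]
  · rfl

theorem HasThresholdPayments.utility_update_le_truthful (hA : MonotoneAllocation A)
    (hp : HasThresholdPayments A p) (hv : 0 ≤ v) (hx : 0 ≤ x) :
    utility A p v (update b i x) i ≤ utility A p v (update b i v) i := by
  rw [hp.utility_update, hp.utility_update]
  split_ifs with hxwin hvwin hvwin
  · rfl
  · linarith [le_threshold_of_loses hA hx hxwin hvwin]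
  · linarith [threshold_le_of_wins hv hvwin]
  · rfl

end SingleItemAuction

open SingleItemAuction in
/-- Sufficiency direction of Myerson's lemma for single-item auctions:
a monotone allocation rule together with the threshold-bid payment rule
(non-winners pay 0, the winner pays the infimum bid with which he would
still win) yields a truthful mechanism. -/
theorem monotone_with_threshold_payment_truthful
    (n : ℕ) (A : (Fin n → ℝ) → Option (Fin n))
    -- monotonicity of the allocation rule
    (hmono : ∀ b b' : Fin n → ℝ, ∀ i : Fin n, A b = some i →
      (∀ j, j ≠ i → b' j = b j) → b i < b' i → A b' = some i)
    (p : (Fin n → ℝ) → Fin n → ℝ)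
    -- the payment rule: non-winners pay 0; the winner pays his threshold bid
    (hp : ∀ b : Fin n → ℝ, ∀ i : Fin n,
      p b i = if A b = some i
        then sInf {x : ℝ | 0 ≤ x ∧ A (Function.update b i x) = some i}
        else 0) :
    -- truthfulness: bidding one's true value maximizes utility, and
    -- a truthtelling bidder has nonnegative utility
    ∀ (i : Fin n) (v : ℝ), 0 ≤ v → ∀ b : Fin n → ℝ, (∀ j, 0 ≤ b j) →
      (∀ x : ℝ, 0 ≤ x →
        (if A (Function.update b i x) = some i then v - p (Function.update b i x) i else 0) ≤
        (if A (Function.update b i v) = some i then v - p (Function.update b i v) i else 0)) ∧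
      0 ≤ (if A (Function.update b i v) = some i then v - p (Function.update b i v) i else 0) := by
  have hp' : HasThresholdPayments A p := hp
  intro i v hv b _
  exact ⟨fun x hx => hp'.utility_update_le_truthful hmono hv hx, hp'.utility_truthful_nonneg hv⟩
end

section
/- (Monotonicity of Algorithm 1, the key step in its truthfulness.) The allocation rule of Algorithm 1 is monotone: for any fixed predicted values v_hat_1 >= v_hat_2 > 0 and parameter gamma >= 1, if bidder i wins under bids (b_1, b_2), then bidder i still wins when he unilaterally raises his own bid (i.e., under any bid vector that agrees with (b_1,b_2) except that bidder i's bid is strictly larger). -/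
open Classical

/-- The allocation rule of Algorithm 1 (two-bidder single-item auction with
predictions).  Bidder `0` is the bidder with the larger predicted value
`vh1` and bidder `1` has predicted value `vh2`.  Ties are broken in favor
of bidder `0`.  `none` means there is no winner. -/
noncomputable def alg1Winner (vh1 vh2 γ b1 b2 : ℝ) : Option (Fin 2) :=
  if vh2 < vh1 / γ ^ 2 then
    -- bar branch: br(1) = vh1/γ, br(2) = 1, highest bidder in S wins
    if vh1 / γ ≤ b1 ∧ (¬ (1 ≤ b2) ∨ b2 ≤ b1) then some 0
    else if 1 ≤ b2 then some 1
    else none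
  else
    if vh1 / γ ≤ b1 then some 0
    else
      -- weighted branch: w1 = 1/γ², w2 = 1, S = {i : bᵢ ≥ 1}
      if 1 ≤ b1 ∧ (¬ (1 ≤ b2) ∨ b2 ≤ (1 / γ ^ 2) * b1) then some 0
      else if 1 ≤ b2 then some 1
      else none

/-!
Bidder `0` wins exactly when a condition holds that is monotone in his own bid `b1` and antitone
in the rival bid `b2` (in the weighted branch the direct win `vh1 / γ ≤ b1` and the weighted
comparison merge into one disjunction); bidder `1` wins exactly when `1 ≤ b2` and that condition
fails. Raising `b1` preserves the condition, and raising `b2` preserves both `1 ≤ b2` and the failure.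
-/

def Alg1FirstWins (vh1 vh2 γ b1 b2 : ℝ) : Prop :=
  if vh2 < vh1 / γ ^ 2 then vh1 / γ ≤ b1 ∧ (b2 < 1 ∨ b2 ≤ b1)
  else vh1 / γ ≤ b1 ∨ (1 ≤ b1 ∧ (b2 < 1 ∨ b2 ≤ b1 / γ ^ 2))

section

variable (vh1 vh2 γ : ℝ)

theorem alg1Winner_eq_some_zero_iff (b1 b2 : ℝ) :
    alg1Winner vh1 vh2 γ b1 b2 = some 0 ↔ Alg1FirstWins vh1 vh2 γ b1 b2 := by
  simp only [alg1Winner, Alg1FirstWins, one_div_mul_eq_div]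
  split_ifs <;> simp_all [not_le]

theorem alg1Winner_eq_some_one_iff (b1 b2 : ℝ) :
    alg1Winner vh1 vh2 γ b1 b2 = some 1 ↔ ¬ Alg1FirstWins vh1 vh2 γ b1 b2 ∧ 1 ≤ b2 := by
  simp only [alg1Winner, Alg1FirstWins, one_div_mul_eq_div]
  split_ifs <;> simp_all [not_le]

theorem alg1FirstWins_monotone_left (b2 : ℝ) :
    Monotone fun b1 => Alg1FirstWins vh1 vh2 γ b1 b2 := by
  intro b1 b1' hle
  have hdiv : b1 / γ ^ 2 ≤ b1' / γ ^ 2 := div_le_div_of_nonneg_right hle (sq_nonneg γ)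
  unfold Alg1FirstWins
  split_ifs
  · rintro ⟨hbar, hrival⟩
    exact ⟨hbar.trans hle, hrival.imp_right (·.trans hle)⟩
  · rintro (hbar | ⟨hone, hrival⟩)
    · exact .inl (hbar.trans hle)
    · exact .inr ⟨hone.trans hle, hrival.imp_right (·.trans hdiv)⟩

theorem alg1FirstWins_antitone_right (b1 : ℝ) :
    Antitone fun b2 => Alg1FirstWins vh1 vh2 γ b1 b2 := by
  intro b2 b2' hle
  have hrival {x : ℝ} : b2' < 1 ∨ b2' ≤ x → b2 < 1 ∨ b2 ≤ x :=
    Or.imp (hle.trans_lt ·) (hle.trans ·)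
  unfold Alg1FirstWins
  split_ifs
  · exact And.imp_right hrival
  · exact Or.imp_right (And.imp_right hrival)

end

theorem alg1Winner_monotone_general (vh1 vh2 γ b1 b2 : ℝ) :
    (alg1Winner vh1 vh2 γ b1 b2 = some 0 →
      ∀ b1' : ℝ, b1 < b1' → alg1Winner vh1 vh2 γ b1' b2 = some 0) ∧
    (alg1Winner vh1 vh2 γ b1 b2 = some 1 →
      ∀ b2' : ℝ, b2 < b2' → alg1Winner vh1 vh2 γ b1 b2' = some 1) := by
  simp only [alg1Winner_eq_some_zero_iff, alg1Winner_eq_some_one_iff]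
  refine ⟨fun hwins b1' hlt => alg1FirstWins_monotone_left vh1 vh2 γ b2 hlt.le hwins, ?_⟩
  rintro ⟨hloses, hclears⟩ b2' hlt
  exact ⟨fun hwins' => hloses (alg1FirstWins_antitone_right vh1 vh2 γ b1 hlt.le hwins'),
    hclears.trans hlt.le⟩

/-- Monotonicity of the allocation rule of Algorithm 1: a winner keeps
winning when he unilaterally raises his own bid. -/
theorem alg1Winner_monotone (vh1 vh2 γ b1 b2 : ℝ)
    (h12 : vh2 ≤ vh1) (hvh2 : 0 < vh2) (hγ : 1 ≤ γ)
    (hb1 : 0 ≤ b1) (hb2 : 0 ≤ b2) :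
    (alg1Winner vh1 vh2 γ b1 b2 = some 0 →
      ∀ b1' : ℝ, b1 < b1' → alg1Winner vh1 vh2 γ b1' b2 = some 0) ∧
    (alg1Winner vh1 vh2 γ b1 b2 = some 1 →
      ∀ b2' : ℝ, b2 < b2' → alg1Winner vh1 vh2 γ b1 b2' = some 1) :=
  alg1Winner_monotone_general vh1 vh2 γ b1 b2
end

section
/- (Lemma 3.4.) Suppose gamma >= 1, eta > gamma, h >= 1, the true values satisfy 1 <= v1_star <= h and 1 <= v2_star <= h, the predicted values satisfy v_hat_1 >= v_hat_2 > 0 with v_hat_2 >= v_hat_1/gamma^2, and the prediction-error bounds v_hat_i <= eta * vi_star and vi_star <= eta * v_hat_i hold for i = 1,2. If both bidders bid truthfully (b_i = vi_star), then Algorithm 1 has a winner j, and max(v1_star, v2_star) <= max( gamma^2 * eta^2, h * eta / gamma^2 ) * theta(j), where theta(j) is the winner's threshold bid; i.e., the approximation ratio OPT/PAY is at most max(gamma^2 * eta^2, h * eta / gamma^2). -/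
/-!
In the weighted branch `v̂₂ ≥ v̂₁ / γ²`, truthful bidding gives `OPT ≤ η v̂₁`, and every
threshold is at least `η v̂₁ / (γ² η²)`. If the top-predicted bidder wins, his threshold is
at least `min (v̂₁ / γ, γ² v₂*)`, and `v̂₁ ≤ γ² v̂₂ ≤ γ² η v₂*`. Otherwise his truthful bid
`v₁*` is below `v̂₁ / γ`, the other bidder must outbid the weighted bid `v₁* / γ²`, and
`v̂₁ ≤ η v₁*`.
-/

open Classical

/-- The threshold bid of bidder `j` in Algorithm 1 when the other bidder's
bid is fixed as under truthful bidding. -/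
noncomputable def alg1Threshold (vh1 vh2 γ v1star v2star : ℝ) (j : Fin 2) : ℝ :=
  if j = 0 then sInf {x : ℝ | 0 ≤ x ∧ alg1Winner vh1 vh2 γ x v2star = some 0}
  else sInf {x : ℝ | 0 ≤ x ∧ alg1Winner vh1 vh2 γ v1star x = some 1}

section Weighted

variable {vh1 vh2 γ : ℝ}

theorem alg1Winner_of_weighted (hlow : vh1 / γ ^ 2 ≤ vh2) (hγ : 0 < γ) {b1 b2 : ℝ}
    (hb2 : 1 ≤ b2) :
    alg1Winner vh1 vh2 γ b1 b2 =
      if vh1 / γ ≤ b1 ∨ (1 ≤ b1 ∧ γ ^ 2 * b2 ≤ b1) then some 0 else some 1 := by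
  simp only [alg1Winner, not_lt.mpr hlow, if_false, hb2, not_true_eq_false, false_or,
    if_true, one_div_mul_eq_div, le_div_iff₀' (pow_pos hγ 2)]
  by_cases h : vh1 / γ ≤ b1 <;> simp [h]

theorem one_le_of_alg1Winner_eq_some_one {b1 b2 : ℝ}
    (h : alg1Winner vh1 vh2 γ b1 b2 = some 1) : 1 ≤ b2 := by
  unfold alg1Winner at h
  split_ifs at h <;> first | assumption | simp at h

theorem alg1Threshold_nonneg (v1star v2star : ℝ) (j : Fin 2) :
    0 ≤ alg1Threshold vh1 vh2 γ v1star v2star j := by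
  unfold alg1Threshold
  split_ifs <;> exact Real.sInf_nonneg fun x hx => hx.1

theorem min_le_alg1Threshold_zero (hlow : vh1 / γ ^ 2 ≤ vh2) (hγ : 0 < γ) (v1star : ℝ)
    {v2star : ℝ} (hv2 : 1 ≤ v2star) :
    min (vh1 / γ) (γ ^ 2 * v2star) ≤ alg1Threshold vh1 vh2 γ v1star v2star 0 := by
  rw [alg1Threshold, if_pos rfl]
  refine le_csInf ⟨max 1 (γ ^ 2 * v2star), by positivity, ?_⟩ fun x ⟨_, hx⟩ => ?_
  · rw [alg1Winner_of_weighted hlow hγ hv2, if_pos (Or.inr ⟨le_max_left _ _, le_max_right _ _⟩)]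
  · rw [alg1Winner_of_weighted hlow hγ hv2] at hx
    split_ifs at hx with h
    · rcases h with h | h
      · exact min_le_of_left_le h
      · exact min_le_of_right_le h.2
    · simp at hx

theorem div_le_alg1Threshold_one (hlow : vh1 / γ ^ 2 ≤ vh2) (hγ : 0 < γ) {v1star : ℝ}
    (hv1 : 1 ≤ v1star) (hv1vh1 : v1star < vh1 / γ) (v2star : ℝ) :
    v1star / γ ^ 2 ≤ alg1Threshold vh1 vh2 γ v1star v2star 1 := by
  have hγ2 : 0 < γ ^ 2 := by positivity
  have hwin {x : ℝ} (hx : 1 ≤ x) :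
      alg1Winner vh1 vh2 γ v1star x = some 1 ↔ v1star / γ ^ 2 < x := by
    rw [alg1Winner_of_weighted hlow hγ hx, div_lt_iff₀' hγ2]
    simp [hv1vh1.not_ge, hv1]
  rw [alg1Threshold, if_neg (by decide)]
  have hmem : 1 ≤ v1star / γ ^ 2 + 1 :=
    le_add_of_nonneg_left (div_nonneg (zero_le_one.trans hv1) hγ2.le)
  refine le_csInf ⟨v1star / γ ^ 2 + 1, by linarith, (hwin hmem).2 (by linarith)⟩
    fun x ⟨_, hx⟩ => ((hwin (one_le_of_alg1Winner_eq_some_one hx)).1 hx).le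

theorem mul_le_sq_mul_sq_mul_min {η v2star : ℝ} (hγ : 1 ≤ γ) (hη : 1 ≤ η) (hvh1 : 0 ≤ vh1)
    (hv2 : 0 ≤ v2star) (hlow : vh1 / γ ^ 2 ≤ vh2) (herr2 : vh2 ≤ η * v2star) :
    η * vh1 ≤ γ ^ 2 * η ^ 2 * min (vh1 / γ) (γ ^ 2 * v2star) := by
  have hγ0 : 0 < γ := zero_lt_one.trans_le hγ
  rw [mul_min_of_nonneg _ _ (by positivity)]
  refine le_min ?_ ?_
  · calc η * vh1 ≤ γ * η * (η * vh1) :=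
          le_mul_of_one_le_left (by positivity) (one_le_mul_of_one_le_of_one_le hγ hη)
      _ = γ ^ 2 * η ^ 2 * (vh1 / γ) := by field_simp
  · have hvh12 : vh1 ≤ γ ^ 2 * vh2 := by rwa [div_le_iff₀' (by positivity)] at hlow
    calc η * vh1 ≤ η * (γ ^ 2 * (η * v2star)) := by gcongr; exact hvh12.trans (by gcongr)
      _ = γ ^ 2 * η ^ 2 * v2star := by ring
      _ ≤ γ ^ 2 * η ^ 2 * (γ ^ 2 * v2star) := by
          gcongr; exact le_mul_of_one_le_left hv2 (one_le_pow₀ hγ)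

end Weighted

theorem alg1_large_eta_general (γ η h vh1 vh2 v1star v2star : ℝ)
    (hγ : 1 ≤ γ) (hηγ : γ < η)
    (hv1lo : 1 ≤ v1star)
    (hv2lo : 1 ≤ v2star)
    (hvh2pos : 0 < vh2) (hvh12 : vh2 ≤ vh1)
    (herr1a : vh1 ≤ η * v1star) (herr1b : v1star ≤ η * vh1)
    (herr2a : vh2 ≤ η * v2star) (herr2b : v2star ≤ η * vh2)
    (hlow : vh1 / γ ^ 2 ≤ vh2) :
    ∃ j : Fin 2, alg1Winner vh1 vh2 γ v1star v2star = some j ∧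
      max v1star v2star ≤ max (γ ^ 2 * η ^ 2) (h * η / γ ^ 2) *
        alg1Threshold vh1 vh2 γ v1star v2star j := by
  have hγ0 : 0 < γ := zero_lt_one.trans_le hγ
  have hη : 1 ≤ η := hγ.trans hηγ.le
  have hvh1 : 0 ≤ vh1 := hvh2pos.le.trans hvh12
  have hopt : max v1star v2star ≤ η * vh1 := max_le herr1b (herr2b.trans (by gcongr))
  suffices ∃ j : Fin 2, alg1Winner vh1 vh2 γ v1star v2star = some j ∧
      η * vh1 ≤ γ ^ 2 * η ^ 2 * alg1Threshold vh1 vh2 γ v1star v2star j by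
    obtain ⟨j, hwin, hle⟩ := this
    exact ⟨j, hwin, hopt.trans (hle.trans (mul_le_mul_of_nonneg_right (le_max_left _ _)
      (alg1Threshold_nonneg _ _ j)))⟩
  rw [alg1Winner_of_weighted hlow hγ0 hv2lo]
  by_cases hwin : vh1 / γ ≤ v1star ∨ (1 ≤ v1star ∧ γ ^ 2 * v2star ≤ v1star)
  · refine ⟨0, if_pos hwin, ?_⟩
    calc η * vh1 ≤ γ ^ 2 * η ^ 2 * min (vh1 / γ) (γ ^ 2 * v2star) :=
          mul_le_sq_mul_sq_mul_min hγ hη hvh1 (by linarith) hlow herr2a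
      _ ≤ _ := by gcongr; exact min_le_alg1Threshold_zero hlow hγ0 v1star hv2lo
  · refine ⟨1, if_neg hwin, ?_⟩
    have hv1 : v1star < vh1 / γ := not_le.mp fun h => hwin (Or.inl h)
    calc η * vh1 ≤ η * (η * v1star) := by gcongr
      _ = γ ^ 2 * η ^ 2 * (v1star / γ ^ 2) := by field_simp
      _ ≤ _ := by gcongr; exact div_le_alg1Threshold_one hlow hγ0 hv1lo hv1 v2star

/-- Lemma 3.4: when `η > γ` and `v̂₂ ≥ v̂₁/γ²`, under truthful bidding
Algorithm 1 has a winner `j` and `OPT ≤ max(γ²η², hη/γ²) · θ(j)`, i.e. the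
approximation ratio is at most `max(γ²η², hη/γ²)`. -/
theorem alg1_large_eta (γ η h vh1 vh2 v1star v2star : ℝ)
    (hγ : 1 ≤ γ) (hηγ : γ < η) (hh : 1 ≤ h)
    (hv1lo : 1 ≤ v1star) (hv1hi : v1star ≤ h)
    (hv2lo : 1 ≤ v2star) (hv2hi : v2star ≤ h)
    (hvh2pos : 0 < vh2) (hvh12 : vh2 ≤ vh1)
    (herr1a : vh1 ≤ η * v1star) (herr1b : v1star ≤ η * vh1)
    (herr2a : vh2 ≤ η * v2star) (herr2b : v2star ≤ η * vh2)
    (hlow : vh1 / γ ^ 2 ≤ vh2) :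
    ∃ j : Fin 2, alg1Winner vh1 vh2 γ v1star v2star = some j ∧
      max v1star v2star ≤ max (γ ^ 2 * η ^ 2) (h * η / γ ^ 2) *
        alg1Threshold vh1 vh2 γ v1star v2star j :=
  alg1_large_eta_general γ η h vh1 vh2 v1star v2star hγ hηγ hv1lo hv2lo hvh2pos hvh12 herr1a herr1b
    herr2a herr2b hlow
end

section
/- (Lemma 5.2: consistency of the scheduling mechanism under perfect predictions.) Let t be a processing-time matrix with t(i,j) > 0 for all machines i and jobs j, and let gamma be a real with 1 <= gamma <= m. Define t_bar(i,j) = min( t(i,j), (m/gamma) * min over i' of t(i',j) ). Let a_bar be an allocation minimizing the makespan for t_bar. Call a job j greedy if t(a_bar(j), j) > t_bar(a_bar(j), j), and non-greedy otherwise. Define the allocation a by: a(j) = a_bar(j) for every non-greedy job j, and for every greedy job j, a(j) is a machine attaining min over i of t(i,j). Then F(a, t) <= (1 + (1 - 1/m) * gamma) * MS(t). -/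
/-- The makespan of allocation `a` (jobs to machines) for the
processing-time matrix `t`: the largest total load of a machine. -/
noncomputable def mkspan {m n : ℕ} (a : Fin n → Fin m) (t : Fin m → Fin n → ℝ) : ℝ :=
  sSup {x : ℝ | ∃ i : Fin m, x = ∑ j : Fin n, if a j = i then t i j else 0}

/-- The minimum makespan of the scheduling instance `t` over all allocations. -/
noncomputable def optMS {m n : ℕ} (t : Fin m → Fin n → ℝ) : ℝ :=
  sInf {x : ℝ | ∃ a : Fin n → Fin m, x = mkspan a t}

/-!
Let `μⱼ = minᵢ t(i,j)`. Since `t̄ ≤ t`, the optimal makespan `M` of `t̄` is at most `MS(t)`.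
A non-greedy job costs under `a` exactly what it costs under `ā` for `t̄`. A greedy job `j`
has `t̄(ā(j), j) = (m/γ) μⱼ` and costs `μⱼ` under `a`: at most `t̄(ā(j), j)` if it stays
on its machine, and exactly `(γ/m) t̄(ā(j), j)` if it moves. Hence the load of a machine `i`
under `a` is at most its load under `ā` plus `γ/m` times the `ā`-load of the other `m - 1`
machines, i.e. at most `M + (γ/m)(m - 1) M = (1 + (1 - 1/m) γ) M`.
-/

open Finset

namespace Scheduling

variable {m n : ℕ}

noncomputable def machineLoad (a : Fin n → Fin m) (t : Fin m → Fin n → ℝ) (i : Fin m) : ℝ :=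
  ∑ j, if a j = i then t i j else 0

theorem mkspan_eq_sSup_range (a : Fin n → Fin m) (t : Fin m → Fin n → ℝ) :
    mkspan a t = sSup (Set.range (machineLoad a t)) := by
  simp only [mkspan, machineLoad, Set.range, eq_comm]

theorem machineLoad_le_mkspan (a : Fin n → Fin m) (t : Fin m → Fin n → ℝ) (i : Fin m) :
    machineLoad a t i ≤ mkspan a t := by
  rw [mkspan_eq_sSup_range]
  exact le_csSup (Set.finite_range _).bddAbove ⟨i, rfl⟩

theorem mkspan_le_of_forall_machineLoad_le [NeZero m] {a : Fin n → Fin m}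
    {t : Fin m → Fin n → ℝ} {C : ℝ} (h : ∀ i, machineLoad a t i ≤ C) : mkspan a t ≤ C := by
  rw [mkspan_eq_sSup_range]
  exact csSup_le (Set.range_nonempty _) (Set.forall_mem_range.mpr h)

theorem mkspan_mono [NeZero m] (a : Fin n → Fin m) {s t : Fin m → Fin n → ℝ}
    (h : ∀ i j, s i j ≤ t i j) : mkspan a s ≤ mkspan a t :=
  mkspan_le_of_forall_machineLoad_le fun i =>
    (sum_le_sum fun j _ => by split_ifs <;> simp [h]).trans (machineLoad_le_mkspan a t i)

theorem mkspan_le_optMS_of_le [NeZero m] {b : Fin n → Fin m} {s t : Fin m → Fin n → ℝ}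
    (hb : ∀ a, mkspan b s ≤ mkspan a s) (h : ∀ i j, s i j ≤ t i j) :
    mkspan b s ≤ optMS t := by
  refine le_csInf ⟨_, b, rfl⟩ ?_
  rintro _ ⟨a, rfl⟩
  exact (hb a).trans (mkspan_mono a h)

theorem sum_ite_ne_le_mkspan (a : Fin n → Fin m) (t : Fin m → Fin n → ℝ) (i : Fin m) :
    ∑ j, (if a j ≠ i then t (a j) j else 0) ≤ ((m : ℝ) - 1) * mkspan a t := by
  calc ∑ j, (if a j ≠ i then t (a j) j else 0)
      = ∑ i' ∈ univ.erase i, machineLoad a t i' := by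
        simp only [machineLoad]
        rw [sum_comm]
        exact sum_congr rfl fun j _ => by simp [sum_ite_eq]
    _ ≤ ∑ _i' ∈ univ.erase i, mkspan a t := sum_le_sum fun i' _ => machineLoad_le_mkspan a t i'
    _ = ((m : ℝ) - 1) * mkspan a t := by
      rw [sum_const, card_erase_of_mem (mem_univ i), card_univ, Fintype.card_fin, nsmul_eq_mul,
        Nat.cast_pred i.pos]

theorem mkspan_le_of_reassign [NeZero m] {a b : Fin n → Fin m} {s t : Fin m → Fin n → ℝ}
    {c : ℝ} (hc : 0 ≤ c) (hs : ∀ i j, 0 ≤ s i j)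
    (h : ∀ j, t (a j) j ≤ if a j = b j then s (b j) j else c * s (b j) j) :
    mkspan a t ≤ (1 + c * ((m : ℝ) - 1)) * mkspan b s := by
  refine mkspan_le_of_forall_machineLoad_le fun i => ?_
  have hjob : ∀ j, (if a j = i then t i j else 0) ≤
      (if b j = i then s i j else 0) + c * (if b j ≠ i then s (b j) j else 0) := by
    intro j
    by_cases ha : a j = i
    · subst ha
      by_cases hb : b j = a j
      · simpa [hb] using h j
      · simpa [hb, Ne.symm hb] using h j
    · rw [if_neg ha]
      exact add_nonneg (by split_ifs <;> simp [hs]) (mul_nonneg hc (by split_ifs <;> simp [hs]))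
  calc machineLoad a t i
      ≤ machineLoad b s i + c * ∑ j, (if b j ≠ i then s (b j) j else 0) := by
        rw [machineLoad, machineLoad, mul_sum, ← sum_add_distrib]
        exact sum_le_sum fun j _ => hjob j
    _ ≤ mkspan b s + c * (((m : ℝ) - 1) * mkspan b s) := by
        gcongr
        · exact machineLoad_le_mkspan b s i
        · exact sum_ite_ne_le_mkspan b s i
    _ = (1 + c * ((m : ℝ) - 1)) * mkspan b s := by ring

theorem cost_le_of_greedy_rule [NeZero m] {γ : ℝ} (hγ0 : 0 < γ) (hγm : γ ≤ m)
    {t tbar : Fin m → Fin n → ℝ} (ht : ∀ i j, 0 ≤ t i j)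
    (htbar : ∀ i j, tbar i j = min (t i j) ((m / γ) * ⨅ i', t i' j))
    {abar a : Fin n → Fin m}
    (ha_non : ∀ j, ¬ tbar (abar j) j < t (abar j) j → a j = abar j)
    (ha_greedy : ∀ j, tbar (abar j) j < t (abar j) j → ∀ i, t (a j) j ≤ t i j) (j : Fin n) :
    t (a j) j ≤ if a j = abar j then tbar (abar j) j else γ / m * tbar (abar j) j := by
  by_cases hg : tbar (abar j) j < t (abar j) j
  · set μ := ⨅ i', t i' j
    have hμ : t (a j) j = μ :=
      le_antisymm (le_ciInf (ha_greedy j hg)) (ciInf_le (Set.finite_range _).bddBelow _)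
    have hbar : tbar (abar j) j = m / γ * μ := by
      rcases min_choice (t (abar j) j) (m / γ * μ) with h | h
      · rw [htbar, h] at hg
        exact absurd hg (lt_irrefl _)
      · rw [htbar, h]
    have hμ0 : 0 ≤ μ := le_ciInf fun i => ht i j
    have hmγ : 1 ≤ m / γ := (one_le_div hγ0).mpr hγm
    rw [hμ, hbar]
    split_ifs
    · nlinarith
    · have hm0 : (m : ℝ) ≠ 0 := Nat.cast_ne_zero.mpr (NeZero.ne m)
      exact le_of_eq (by field_simp)
  · rw [ha_non j hg, if_pos rfl]
    exact not_lt.mp hg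

end Scheduling

open Scheduling in
/-- Lemma 5.2: consistency of the scheduling mechanism under perfect
predictions.  With `t̄(i,j) = min(t(i,j), (m/γ)·minᵢ' t(i',j))`, an optimal
allocation `ā` for `t̄`, and the allocation `a` that follows `ā` on
non-greedy jobs and assigns each greedy job to a fastest machine, the
makespan of `a` on `t` is at most `(1 + (1 - 1/m)γ) · MS(t)`. -/
theorem scheduling_consistency
    (m n : ℕ) (hm : 0 < m) (γ : ℝ) (hγ1 : 1 ≤ γ) (hγm : γ ≤ m)
    (t : Fin m → Fin n → ℝ) (ht : ∀ i j, 0 < t i j)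
    (tbar : Fin m → Fin n → ℝ)
    (htbar : ∀ i j, tbar i j = min (t i j) ((m / γ) * ⨅ i' : Fin m, t i' j))
    (abar : Fin n → Fin m)
    (habar : ∀ a' : Fin n → Fin m, mkspan abar tbar ≤ mkspan a' tbar)
    (a : Fin n → Fin m)
    -- non-greedy jobs are assigned as in `ā`
    (ha_non : ∀ j : Fin n, ¬ tbar (abar j) j < t (abar j) j → a j = abar j)
    -- greedy jobs are assigned to a machine attaining `minᵢ t(i,j)`
    (ha_greedy : ∀ j : Fin n, tbar (abar j) j < t (abar j) j →
      ∀ i : Fin m, t (a j) j ≤ t i j) :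
    mkspan a t ≤ (1 + (1 - 1 / m) * γ) * optMS t := by
  have : NeZero m := ⟨hm.ne'⟩
  have hγ0 : 0 < γ := one_pos.trans_le hγ1
  have hm1 : (1 : ℝ) ≤ m := by exact_mod_cast hm
  have ht0 : ∀ i j, 0 ≤ t i j := fun i j => (ht i j).le
  have htbar_le : ∀ i j, tbar i j ≤ t i j := fun i j => (htbar i j).trans_le (min_le_left _ _)
  have htbar_nonneg : ∀ i j, 0 ≤ tbar i j := fun i j => by
    rw [htbar]
    exact le_min (ht0 i j) (mul_nonneg (by positivity) (le_ciInf fun i' => ht0 i' j))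
  have hcoef : 1 + γ / m * ((m : ℝ) - 1) = 1 + (1 - 1 / m) * γ := by
    field_simp
  have : (0 : ℝ) ≤ m - 1 := by linarith
  rw [← hcoef]
  calc mkspan a t ≤ (1 + γ / m * ((m : ℝ) - 1)) * mkspan abar tbar :=
        mkspan_le_of_reassign (by positivity) htbar_nonneg
          (cost_le_of_greedy_rule hγ0 hγm ht0 htbar ha_non ha_greedy)
    _ ≤ (1 + γ / m * ((m : ℝ) - 1)) * optMS t := by
        gcongr
        exact mkspan_le_optMS_of_le habar htbar_le
end

section
/- (Lemma 5.3: robustness of the scheduling mechanism.) Let m >= 1, let gamma be a real with 1 <= gamma <= m, let t be a processing-time matrix with t(i,j) > 0 for all machines i and jobs j, and let w be a weight matrix with gamma^2/m^2 <= w(i,j) <= 1 for all i, j. Suppose the allocation a assigns each job j to a machine minimizing the weighted processing time, i.e., for every job j and every machine i, w(a(j), j) * t(a(j), j) <= w(i, j) * t(i, j). Then F(a, t) <= (m^3 / gamma^2) * MS(t). -/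
/-!
A job placed by minimal weighted time pays at most `m²/γ²` times its processing time
on any other machine, because its own weight is at least `γ²/m²` and every weight is at
most `1`. Summing over the jobs, the busiest machine of `a` carries at most `m²/γ²`
times the total work of any allocation `b`, and that total work is at most
`m · F(b, t)`.
-/

section Scheduling

variable {m n : ℕ}

def machineLoad (a : Fin n → Fin m) (t : Fin m → Fin n → ℝ) (i : Fin m) : ℝ :=
  ∑ j, if a j = i then t i j else 0

lemma mkspan_eq_sSup_range (a : Fin n → Fin m) (t : Fin m → Fin n → ℝ) :
    mkspan a t = sSup (Set.range (machineLoad a t)) := by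
  simp only [mkspan, machineLoad, Set.range, eq_comm]

lemma machineLoad_le_mkspan (a : Fin n → Fin m) (t : Fin m → Fin n → ℝ) (i : Fin m) :
    machineLoad a t i ≤ mkspan a t := by
  rw [mkspan_eq_sSup_range]
  exact le_csSup (Set.finite_range _).bddAbove ⟨i, rfl⟩

lemma mkspan_le_of_forall_machineLoad_le {a : Fin n → Fin m} {t : Fin m → Fin n → ℝ} {c : ℝ}
    (hc : 0 ≤ c) (h : ∀ i, machineLoad a t i ≤ c) : mkspan a t ≤ c := by
  rw [mkspan_eq_sSup_range]
  exact Real.sSup_le (Set.forall_mem_range.2 h) hc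

lemma sum_machineLoad (a : Fin n → Fin m) (t : Fin m → Fin n → ℝ) :
    ∑ i, machineLoad a t i = ∑ j, t (a j) j := by
  simp only [machineLoad]
  rw [Finset.sum_comm]
  exact Finset.sum_congr rfl fun j _ => Fintype.sum_ite_eq (a j) (t · j)

lemma machineLoad_le_sum {t : Fin m → Fin n → ℝ} (ht : ∀ i j, 0 ≤ t i j)
    (a : Fin n → Fin m) (i : Fin m) : machineLoad a t i ≤ ∑ j, t (a j) j := by
  refine Finset.sum_le_sum fun j _ => ?_
  split_ifs with h
  · rw [h]
  · exact ht _ _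

lemma sum_le_card_mul_mkspan (a : Fin n → Fin m) (t : Fin m → Fin n → ℝ) :
    ∑ j, t (a j) j ≤ m * mkspan a t := by
  calc ∑ j, t (a j) j = ∑ i, machineLoad a t i := (sum_machineLoad a t).symm
    _ ≤ ∑ _i : Fin m, mkspan a t :=
        Finset.sum_le_sum fun i _ => machineLoad_le_mkspan a t i
    _ = m * mkspan a t := by simp

lemma mkspan_nonneg {t : Fin m → Fin n → ℝ} (ht : ∀ i j, 0 ≤ t i j) (a : Fin n → Fin m) :
    0 ≤ mkspan a t := by
  rw [mkspan_eq_sSup_range]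
  exact Real.sSup_nonneg <| Set.forall_mem_range.2 fun i =>
    Finset.sum_nonneg fun j _ => by split_ifs <;> simp [ht]

lemma mkspan_le_card_mul_mkspan_of_forall_le {t : Fin m → Fin n → ℝ} (ht : ∀ i j, 0 ≤ t i j)
    {a b : Fin n → Fin m} {κ : ℝ} (hκ : 0 ≤ κ) (hab : ∀ j, t (a j) j ≤ κ * t (b j) j) :
    mkspan a t ≤ (m * κ) * mkspan b t := by
  have hb := mkspan_nonneg ht b
  refine mkspan_le_of_forall_machineLoad_le (by positivity) fun i => ?_
  calc machineLoad a t i ≤ ∑ j, t (a j) j := machineLoad_le_sum ht a i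
    _ ≤ ∑ j, κ * t (b j) j := Finset.sum_le_sum fun j _ => hab j
    _ = κ * ∑ j, t (b j) j := (Finset.mul_sum ..).symm
    _ ≤ κ * (m * mkspan b t) := by gcongr; exact sum_le_card_mul_mkspan b t
    _ = (m * κ) * mkspan b t := by ring

lemma le_mul_optMS_of_forall_le_mul_mkspan {t : Fin m → Fin n → ℝ} {x c : ℝ} (hc : 0 ≤ c)
    (a : Fin n → Fin m) (h : ∀ b, x ≤ c * mkspan b t) : x ≤ c * optMS t := by
  rw [optMS, ← smul_eq_mul, ← Real.sInf_smul_of_nonneg hc]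
  refine le_csInf ⟨_, Set.smul_mem_smul_set ⟨a, rfl⟩⟩ ?_
  rintro _ ⟨_, ⟨b, rfl⟩, rfl⟩
  exact h b

end Scheduling

lemma le_inv_mul_of_mul_le_mul {x y u v ε : ℝ} (hε : 0 < ε) (hx : 0 ≤ x) (hy : 0 ≤ y)
    (hu : ε ≤ u) (hv : v ≤ 1) (h : u * x ≤ v * y) : x ≤ ε⁻¹ * y := by
  rw [le_inv_mul_iff₀ hε]
  calc ε * x ≤ u * x := by gcongr
    _ ≤ v * y := h
    _ ≤ y := mul_le_of_le_one_left hy hv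

theorem scheduling_robustness_general
    (m n : ℕ) (γ : ℝ) (hγ1 : 1 ≤ γ)
    (t : Fin m → Fin n → ℝ) (ht : ∀ i j, 0 < t i j)
    (w : Fin m → Fin n → ℝ)
    (hw1 : ∀ i j, γ ^ 2 / m ^ 2 ≤ w i j) (hw2 : ∀ i j, w i j ≤ 1)
    (a : Fin n → Fin m)
    (ha : ∀ (j : Fin n) (i : Fin m), w (a j) j * t (a j) j ≤ w i j * t i j) :
    mkspan a t ≤ (m ^ 3 / γ ^ 2) * optMS t := by
  have ht₀ : ∀ i j, 0 ≤ t i j := fun i j => (ht i j).le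
  have hγ : 0 < γ := zero_lt_one.trans_le hγ1
  have hjob : ∀ (b : Fin n → Fin m) j, t (a j) j ≤ (m ^ 2 / γ ^ 2) * t (b j) j := fun b j => by
    have hm : (0 : ℝ) < m := Nat.cast_pos.2 (a j).pos
    rw [← inv_div]
    exact le_inv_mul_of_mul_le_mul (by positivity) (ht₀ _ _) (ht₀ _ _)
      (hw1 _ _) (hw2 _ _) (ha j (b j))
  refine le_mul_optMS_of_forall_le_mul_mkspan (by positivity) a fun b => ?_
  calc mkspan a t ≤ (m * (m ^ 2 / γ ^ 2)) * mkspan b t :=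
        mkspan_le_card_mul_mkspan_of_forall_le ht₀ (by positivity) (hjob b)
    _ = (m ^ 3 / γ ^ 2) * mkspan b t := by ring

/-- Lemma 5.3: robustness of the scheduling mechanism.  If all weights lie
in `[γ²/m², 1]` and the allocation `a` assigns each job to a machine
minimizing the weighted processing time, then the makespan of `a` is at
most `(m³/γ²) · MS(t)`. -/
theorem scheduling_robustness
    (m n : ℕ) (hm : 1 ≤ m) (γ : ℝ) (hγ1 : 1 ≤ γ) (hγm : γ ≤ m)
    (t : Fin m → Fin n → ℝ) (ht : ∀ i j, 0 < t i j)
    (w : Fin m → Fin n → ℝ)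
    (hw1 : ∀ i j, γ ^ 2 / m ^ 2 ≤ w i j) (hw2 : ∀ i j, w i j ≤ 1)
    (a : Fin n → Fin m)
    (ha : ∀ (j : Fin n) (i : Fin m), w (a j) j * t (a j) j ≤ w i j * t i j) :
    mkspan a t ≤ (m ^ 3 / γ ^ 2) * optMS t :=
  scheduling_robustness_general m n γ hγ1 t ht w hw1 hw2 a ha
end

section
/- (Stability of the weighted assignment under small prediction error; key step in Lemma 5.4.) Let m >= 1, let gamma be a real with 1 <= gamma <= m, and let eta >= 1 satisfy eta^2 <= m/gamma. Let w, t_hat, t be positive real vectors indexed by the m machines, and let i be a machine such that (m/gamma) * w(i) * t_hat(i) <= w(i') * t_hat(i') for every machine i' != i. Suppose t(i'') <= eta * t_hat(i'') and t_hat(i'') <= eta * t(i'') for every machine i''. Then w(i) * t(i) <= w(i') * t(i') for every machine i' != i; that is, machine i still attains the minimum weighted processing time under the true times. -/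
/-! Replacing predicted by true times changes each weighted time by at most a factor `η`, so the
comparison between machine `i` and any `i'` loses at most a factor `η² ≤ m / γ`, which the slack
`m / γ` in the hypothesis on `i` absorbs. -/

theorem mul_le_mul_of_slack_of_approx {α : Type*} [CommSemiring α] [LinearOrder α]
    [IsStrictOrderedRing α] {c η a a' p p' q q' : α} (hc : 0 < c) (hη : 0 ≤ η) (hηc : η ^ 2 ≤ c)
    (ha : 0 ≤ a) (ha' : 0 ≤ a') (hq' : 0 ≤ q') (hslack : c * (a * p) ≤ a' * p')
    (hq : q ≤ η * p) (hp' : p' ≤ η * q') : a * q ≤ a' * q' := by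
  refine le_of_mul_le_mul_left ?_ hc
  calc c * (a * q) ≤ c * (a * (η * p)) := by gcongr
    _ = η * (c * (a * p)) := by ring
    _ ≤ η * (a' * p') := by gcongr
    _ ≤ η * (a' * (η * q')) := by gcongr
    _ = η ^ 2 * (a' * q') := by ring
    _ ≤ c * (a' * q') := by gcongr

theorem weighted_assignment_stable_general
    (m : ℕ) (γ η : ℝ)
    (hη : 1 ≤ η) (hη2 : η ^ 2 ≤ m / γ)
    (w that t : Fin m → ℝ)
    (hw : ∀ i, 0 < w i) (ht : ∀ i, 0 < t i)
    (i : Fin m)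
    (hi : ∀ i' : Fin m, i' ≠ i → (m / γ) * (w i * that i) ≤ w i' * that i')
    (hpred1 : ∀ i'' : Fin m, t i'' ≤ η * that i'')
    (hpred2 : ∀ i'' : Fin m, that i'' ≤ η * t i'') :
    ∀ i' : Fin m, i' ≠ i → w i * t i ≤ w i' * t i' := by
  intro i' hi'
  have hslack_pos : 0 < (m / γ : ℝ) := zero_lt_one.trans_le ((one_le_pow₀ hη).trans hη2)
  exact mul_le_mul_of_slack_of_approx hslack_pos (zero_le_one.trans hη) hη2 (hw i).le (hw i').le
    (ht i').le (hi i' hi') (hpred1 i) (hpred2 i')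

/-- Stability of the weighted assignment under small prediction error (key
step in Lemma 5.4): if machine `i` attains the minimum weighted predicted
time with slack factor `m/γ`, and the true times are within factor `η` of
the predicted ones with `η² ≤ m/γ`, then `i` still attains the minimum
weighted processing time under the true times. -/
theorem weighted_assignment_stable
    (m : ℕ) (hm : 0 < m) (γ η : ℝ) (hγ1 : 1 ≤ γ) (hγm : γ ≤ m)
    (hη : 1 ≤ η) (hη2 : η ^ 2 ≤ m / γ)
    (w that t : Fin m → ℝ)
    (hw : ∀ i, 0 < w i) (hthat : ∀ i, 0 < that i) (ht : ∀ i, 0 < t i)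
    (i : Fin m)
    (hi : ∀ i' : Fin m, i' ≠ i → (m / γ) * (w i * that i) ≤ w i' * that i')
    (hpred1 : ∀ i'' : Fin m, t i'' ≤ η * that i'')
    (hpred2 : ∀ i'' : Fin m, that i'' ≤ η * t i'') :
    ∀ i' : Fin m, i' ≠ i → w i * t i ≤ w i' * t i' :=
  weighted_assignment_stable_general m γ η hη hη2 w that t hw ht i hi hpred1 hpred2
end

section
/- (Truthfulness of Algorithm 4, part of Lemma 6.1.) For every number of agents n >= 1 and every fixed dictator i_hat, Algorithm 4 is truthful (strategyproof): for every true location profile v, every agent i, and every misreport x'_i, agent i's connection cost under the facilities computed from the truthful profile v is at most his connection cost under the facilities computed from the profile in which agent i reports x'_i and every other agent j reports v_j. -/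
/-!
Only the dictator's report fixes the first facility, so the dictator has cost `0` and no other
agent can move it. Measure positions from the dictator, let `t` be the offset of agent `i ≠ ihat`,
and `a`, `b` the left and right reaches of the profile in which `i` reports the dictator's
location, i.e. of the other agents. Reporting truthfully yields reaches `max a (-t)` and `max b t`;
any misreport yields reaches `A ≥ a`, `B ≥ b`. A misreport then puts the second facility at
offset `≥ max (2a) b` (if `A ≤ B`) or `≤ -max a (2b)` (otherwise), at distance `≥ max (2a) b - t`,
resp. `≥ max a (2b) + t`, from the agent, while a short case check shows the truthful cost is
bounded by the positive parts of both.
-/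

/-- Algorithm 4 (two-facility game on a line) with a fixed dictator `ihat`:
the first facility is placed at the dictator's report, and the second at
distance `max(2·d_A, d_B)` to the right if `d_A ≤ d_B`, and at distance
`max(d_A, 2·d_B)` to the left otherwise, where `d_A` (resp. `d_B`) is the
largest distance from the dictator's report to a report on its left
(resp. right). -/
noncomputable def alg4 {n : ℕ} (ihat : Fin n) (x : Fin n → ℝ) : ℝ × ℝ :=
  let l1 := x ihat
  let dA := sSup {d : ℝ | ∃ j : Fin n, x j ≤ l1 ∧ d = l1 - x j}
  let dB := sSup {d : ℝ | ∃ j : Fin n, l1 ≤ x j ∧ d = x j - l1}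
  if dA ≤ dB then (l1, l1 + max (2 * dA) dB) else (l1, l1 - max dA (2 * dB))

open Finset Function

theorem Real.sSup_setOf_nonneg_eq_sup' {ι : Type*} [Fintype ι] (g : ι → ℝ) {j₀ : ι}
    (h₀ : 0 ≤ g j₀) :
    sSup {d | ∃ j, 0 ≤ g j ∧ d = g j} = univ.sup' ⟨j₀, mem_univ j₀⟩ g := by
  obtain ⟨k, -, hk⟩ := exists_mem_eq_sup' ⟨j₀, mem_univ j₀⟩ g
  refine IsGreatest.csSup_eq ⟨⟨k, ?_, hk⟩, ?_⟩
  · exact hk ▸ h₀.trans (le_sup' g (mem_univ j₀))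
  · rintro _ ⟨j, -, rfl⟩
    exact le_sup' g (mem_univ j)

theorem Finset.sup'_univ_update {ι α : Type*} [Fintype ι] [DecidableEq ι] [LinearOrder α]
    (h : (univ : Finset ι).Nonempty) (g : ι → α) {i j : ι} {z : α} (hj : j ≠ i)
    (hz : z ≤ g j) (y : α) :
    univ.sup' h (update g i y) = max (univ.sup' h (update g i z)) y := by
  refine le_antisymm (sup'_le _ _ fun k _ => ?_) (max_le (sup'_le _ _ fun k _ => ?_) ?_)
  · rcases eq_or_ne k i with rfl | hk
    · exact (update_self k y g).le.trans (le_max_right _ _)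
    · calc update g i y k = update g i z k := by rw [update_of_ne hk, update_of_ne hk]
        _ ≤ _ := le_sup' _ (mem_univ k)
        _ ≤ _ := le_max_left _ _
  · rcases eq_or_ne k i with rfl | hk
    · calc update g k z k = z := update_self k z g
        _ ≤ update g k y j := hz.trans (update_of_ne hj y g).ge
        _ ≤ _ := le_sup' _ (mem_univ j)
    · calc update g i z k = update g i y k := by rw [update_of_ne hk, update_of_ne hk]
        _ ≤ _ := le_sup' _ (mem_univ k)
  · exact (update_self i y g).ge.trans (le_sup' _ (mem_univ i))

namespace Alg4

variable {n : ℕ} (ihat : Fin n)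

-- The term `j = ihat` vanishes, so reports on the far side do not count: this is `d_A`.
noncomputable def leftReach (x : Fin n → ℝ) : ℝ :=
  univ.sup' ⟨ihat, mem_univ ihat⟩ fun j => x ihat - x j

noncomputable def rightReach (x : Fin n → ℝ) : ℝ :=
  univ.sup' ⟨ihat, mem_univ ihat⟩ fun j => x j - x ihat

noncomputable def secondOffset (A B : ℝ) : ℝ :=
  if A ≤ B then max (2 * A) B else -max A (2 * B)

theorem alg4_eq (x : Fin n → ℝ) :
    alg4 ihat x = (x ihat, x ihat + secondOffset (leftReach ihat x) (rightReach ihat x)) := by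
  have hA : sSup {d | ∃ j, x j ≤ x ihat ∧ d = x ihat - x j} = leftReach ihat x := by
    simp_rw [← sub_nonneg (a := x ihat)]
    exact Real.sSup_setOf_nonneg_eq_sup' _ (sub_self _).ge
  have hB : sSup {d | ∃ j, x ihat ≤ x j ∧ d = x j - x ihat} = rightReach ihat x := by
    simp_rw [← sub_nonneg (b := x ihat)]
    exact Real.sSup_setOf_nonneg_eq_sup' _ (sub_self _).ge
  simp only [alg4, hA, hB, secondOffset]
  split_ifs <;> simp [sub_eq_add_neg]

theorem leftReach_nonneg (x : Fin n → ℝ) : 0 ≤ leftReach ihat x :=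
  (sub_self (x ihat)).ge.trans (le_sup' (fun j => x ihat - x j) (mem_univ ihat))

theorem rightReach_nonneg (x : Fin n → ℝ) : 0 ≤ rightReach ihat x :=
  (sub_self (x ihat)).ge.trans (le_sup' (fun j => x j - x ihat) (mem_univ ihat))

variable {ihat} {i : Fin n}

theorem leftReach_update (hi : i ≠ ihat) (x : Fin n → ℝ) (y : ℝ) :
    leftReach ihat (update x i y) =
      max (leftReach ihat (update x i (x ihat))) (x ihat - y) := by
  simp only [leftReach, update_of_ne hi.symm, apply_update (fun _ t => x ihat - t)]
  exact sup'_univ_update _ _ hi.symm le_rfl _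

theorem rightReach_update (hi : i ≠ ihat) (x : Fin n → ℝ) (y : ℝ) :
    rightReach ihat (update x i y) =
      max (rightReach ihat (update x i (x ihat))) (y - x ihat) := by
  simp only [rightReach, update_of_ne hi.symm, apply_update (fun _ t => t - x ihat)]
  exact sup'_univ_update _ _ hi.symm le_rfl _

section Cost

variable {a b t : ℝ}

theorem min_abs_sub_secondOffset_le_right (ha : 0 ≤ a) (hb : 0 ≤ b) :
    min |t| |t - secondOffset (max a (-t)) (max b t)| ≤ max (max (2 * a) b - t) 0 := by
  unfold secondOffset
  grind

theorem min_abs_sub_secondOffset_le_left (ha : 0 ≤ a) (hb : 0 ≤ b) :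
    min |t| |t - secondOffset (max a (-t)) (max b t)| ≤ max (max a (2 * b) + t) 0 := by
  unfold secondOffset
  grind

theorem min_abs_sub_secondOffset_le (ha : 0 ≤ a) (hb : 0 ≤ b) {A B : ℝ} (hA : a ≤ A)
    (hB : b ≤ B) :
    min |t| |t - secondOffset (max a (-t)) (max b t)| ≤ min |t| |t - secondOffset A B| := by
  refine le_min (min_le_left _ _) ?_
  by_cases hAB : A ≤ B
  · refine (min_abs_sub_secondOffset_le_right ha hb).trans (max_le ?_ (abs_nonneg _))
    calc max (2 * a) b - t ≤ max (2 * A) B - t := by gcongr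
      _ ≤ |t - secondOffset A B| := by
        rw [secondOffset, if_pos hAB, abs_sub_comm]
        exact le_abs_self _
  · refine (min_abs_sub_secondOffset_le_left ha hb).trans (max_le ?_ (abs_nonneg _))
    calc max a (2 * b) + t ≤ max A (2 * B) + t := by gcongr
      _ ≤ |t - secondOffset A B| := by
        rw [secondOffset, if_neg hAB, sub_neg_eq_add, add_comm]
        exact le_abs_self _

end Cost

end Alg4

open Alg4

theorem alg4_truthful_general (n : ℕ) (ihat : Fin n)
    (v : Fin n → ℝ) (i : Fin n) (x' : ℝ) :
    min |v i - (alg4 ihat v).1| |v i - (alg4 ihat v).2| ≤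
    min |v i - (alg4 ihat (Function.update v i x')).1|
        |v i - (alg4 ihat (Function.update v i x')).2| := by
  rcases eq_or_ne i ihat with rfl | hi
  · rw [alg4_eq, sub_self, abs_zero]
    exact (min_le_left _ _).trans (le_min (abs_nonneg _) (abs_nonneg _))
  set a := leftReach ihat (update v i (v ihat))
  set b := rightReach ihat (update v i (v ihat))
  have hL : leftReach ihat v = max a (-(v i - v ihat)) := by
    rw [neg_sub, ← leftReach_update hi, update_eq_self]
  have hR : rightReach ihat v = max b (v i - v ihat) := by
    rw [← rightReach_update hi, update_eq_self]
  have hA : a ≤ leftReach ihat (update v i x') := leftReach_update hi v x' ▸ le_max_left _ _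
  have hB : b ≤ rightReach ihat (update v i x') := rightReach_update hi v x' ▸ le_max_left _ _
  simp only [alg4_eq, update_of_ne hi.symm, hL, hR, ← sub_sub]
  exact min_abs_sub_secondOffset_le (leftReach_nonneg ihat _) (rightReach_nonneg ihat _) hA hB

/-- Truthfulness of Algorithm 4 (part of Lemma 6.1): for any dictator
`ihat`, true profile `v`, agent `i` and misreport `x'`, agent `i`'s
connection cost under the facilities computed from the truthful profile is
at most his connection cost under the facilities computed from the profile
where he misreports. -/
theorem alg4_truthful (n : ℕ) (hn : 1 ≤ n) (ihat : Fin n)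
    (v : Fin n → ℝ) (i : Fin n) (x' : ℝ) :
    min |v i - (alg4 ihat v).1| |v i - (alg4 ihat v).2| ≤
    min |v i - (alg4 ihat (Function.update v i x')).1|
        |v i - (alg4 ihat (Function.update v i x')).2| :=
  alg4_truthful_general n ihat v i x'
end

section
/- (Robustness of Algorithm 4, part of Lemma 6.1.) For every number of agents n >= 2, every location profile v, and every choice of dictator i_hat, the social cost of the facility pair output by Algorithm 4 on the truthful report profile x = v is at most (2n - 1) * OPT(v). -/
open Finset Set

section Reflection

variable {ι α : Type*} [AddCommGroup α] [PartialOrder α] [IsOrderedAddMonoid α]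
  {v : ι → α} {a : α}

lemma IsGreatest.range_neg (h : IsGreatest (range v) a) : IsLeast (range (-v)) (-a) := by
  obtain ⟨⟨q, hq⟩, hle⟩ := h
  exact ⟨⟨q, by simp [hq]⟩, by rintro _ ⟨j, rfl⟩; simpa using hle (mem_range_self j)⟩

lemma IsLeast.range_neg (h : IsLeast (range v) a) : IsGreatest (range (-v)) (-a) := by
  obtain ⟨⟨p, hp⟩, hle⟩ := h
  exact ⟨⟨p, by simp [hp]⟩, by rintro _ ⟨j, rfl⟩; simpa using hle (mem_range_self j)⟩

end Reflection

lemma le_mul_csInf {S : Set ℝ} {a c : ℝ} (hS : S.Nonempty) (hc : 0 < c)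
    (h : ∀ s ∈ S, a ≤ c * s) : a ≤ c * sInf S := by
  rw [← div_le_iff₀' hc]
  exact le_csInf hS fun s hs => (div_le_iff₀' hc).2 (h s hs)

lemma abs_sub_le_abs_sub_of_two_mul_le {s y₁ y₂ : ℝ} (hy : y₁ ≤ y₂)
    (hs : 2 * s ≤ y₁ + y₂) : |s - y₁| ≤ |s - y₂| := by
  rw [← sq_le_sq]
  nlinarith [mul_nonneg (sub_nonneg.2 hy) (sub_nonneg.2 hs)]

variable {ι : Type*} [Fintype ι]

def socialCost (v : ι → ℝ) (y₁ y₂ : ℝ) : ℝ := ∑ i, min |v i - y₁| |v i - y₂|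

section SocialCost

variable (v : ι → ℝ) (y₁ y₂ : ℝ)

lemma socialCost_nonneg : 0 ≤ socialCost v y₁ y₂ :=
  sum_nonneg fun _ _ => le_min (abs_nonneg _) (abs_nonneg _)

lemma socialCost_comm : socialCost v y₁ y₂ = socialCost v y₂ y₁ := by
  simp only [socialCost, min_comm]

lemma socialCost_neg : socialCost (-v) (-y₁) (-y₂) = socialCost v y₁ y₂ := by
  simp only [socialCost, Pi.neg_apply, neg_sub_neg, abs_sub_comm]

end SocialCost

section Clusters

variable {v : ι → ℝ} {y₁ y₂ : ℝ} {i j : ι}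

lemma abs_sub_le_socialCost_of_near (hi : |v i - y₁| ≤ |v i - y₂|)
    (hj : |v j - y₁| ≤ |v j - y₂|) : |v i - v j| ≤ socialCost v y₁ y₂ := by
  obtain rfl | hij := eq_or_ne i j
  · simpa using socialCost_nonneg v y₁ y₂
  calc |v i - v j| ≤ |v i - y₁| + |y₁ - v j| := abs_sub_le _ _ _
    _ = |v i - y₁| + |v j - y₁| := by rw [abs_sub_comm y₁]
    _ = min |v i - y₁| |v i - y₂| + min |v j - y₁| |v j - y₂| := by
      rw [min_eq_left hi, min_eq_left hj]
    _ ≤ ∑ k, min |v k - y₁| |v k - y₂| :=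
      add_le_sum (f := fun k => min |v k - y₁| |v k - y₂|)
        (fun _ _ => le_min (abs_nonneg _) (abs_nonneg _)) (mem_univ i) (mem_univ j) hij

lemma abs_sub_le_socialCost_of_le_midpoint (hy : y₁ ≤ y₂) (hi : 2 * v i ≤ y₁ + y₂)
    (hj : 2 * v j ≤ y₁ + y₂) : |v i - v j| ≤ socialCost v y₁ y₂ :=
  abs_sub_le_socialCost_of_near (abs_sub_le_abs_sub_of_two_mul_le hy hi)
    (abs_sub_le_abs_sub_of_two_mul_le hy hj)

lemma abs_sub_le_socialCost_of_midpoint_le (hy : y₁ ≤ y₂) (hi : y₁ + y₂ ≤ 2 * v i)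
    (hj : y₁ + y₂ ≤ 2 * v j) : |v i - v j| ≤ socialCost v y₁ y₂ := by
  have h := abs_sub_le_socialCost_of_le_midpoint (v := -v) (i := j) (j := i) (neg_le_neg hy)
    (by simp only [Pi.neg_apply]; linarith) (by simp only [Pi.neg_apply]; linarith)
  rwa [socialCost_neg, socialCost_comm, Pi.neg_apply, Pi.neg_apply, neg_sub_neg] at h

end Clusters

lemma sum_le_card_sub_one_mul {f : ι → ℝ} {B : ℝ} (k : ι) (hk : f k = 0)
    (hf : ∀ i, f i ≤ B) : ∑ i, f i ≤ (Fintype.card ι - 1) * B := by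
  classical
  rw [← sum_erase_add _ _ (mem_univ k), hk, add_zero]
  calc ∑ i ∈ univ.erase k, f i ≤ (univ.erase k).card • B :=
        sum_le_card_nsmul _ _ _ fun i _ => hf i
    _ = (Fintype.card ι - 1) * B := by
      rw [card_erase_of_mem (mem_univ k), card_univ, nsmul_eq_mul,
        Nat.cast_sub (Fintype.card_pos_iff.2 ⟨k⟩), Nat.cast_one]

section Reach

variable {v : ι → ℝ} {k : ι} {dA dB y₁ y₂ : ℝ}

lemma reach_le_socialCost (ha : IsLeast (range v) (v k - dA))
    (hb : IsGreatest (range v) (v k + dB)) (hAB : dA ≤ dB) (hy : y₁ ≤ y₂) :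
    dA ≤ socialCost v y₁ y₂ := by
  obtain ⟨⟨p, hp⟩, hlo⟩ := ha
  obtain ⟨⟨q, hq⟩, hhi⟩ := hb
  have hA : 0 ≤ dA := by linarith [hlo (mem_range_self k)]
  rcases le_total (2 * v k) (y₁ + y₂) with hk | hk
  · have := abs_sub_le_socialCost_of_le_midpoint hy hk (j := p) (by linarith)
    rwa [hp, sub_sub_cancel, abs_of_nonneg hA] at this
  · have := abs_sub_le_socialCost_of_midpoint_le hy (j := k) (i := q) (by linarith) hk
    rw [hq, add_sub_cancel_left, abs_of_nonneg (hA.trans hAB)] at this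
    linarith

lemma min_abs_sub_le_two_mul_socialCost (ha : IsLeast (range v) (v k - dA))
    (hb : IsGreatest (range v) (v k + dB)) (hAB : dA ≤ dB) (hy : y₁ ≤ y₂) (i : ι) :
    min |v i - v k| |v i - (v k + max (2 * dA) dB)| ≤ 2 * socialCost v y₁ y₂ := by
  have hAC := reach_le_socialCost ha hb hAB hy
  have hC := socialCost_nonneg v y₁ y₂
  have hA : 0 ≤ dA := by linarith [ha.2 (mem_range_self k)]
  obtain ⟨⟨q, hq⟩, hhi⟩ := hb
  have hiq : v i ≤ v q := hq ▸ hhi (mem_range_self i)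
  set m := max (2 * dA) dB
  have hm : dB ≤ m ∧ m ≤ dA + dB := ⟨le_max_right _ _, max_le (by linarith) (by linarith)⟩
  rcases le_total (2 * v k) (y₁ + y₂) with hk | hk <;>
    rcases le_total (2 * v i) (y₁ + y₂) with hi | hi
  · have := abs_sub_le_socialCost_of_le_midpoint hy hi hk
    linarith [min_le_left |v i - v k| |v i - (v k + m)|]
  · -- `i` shares its optimal facility with the rightmost agent `q`, which lies within `dA` of
    -- the second facility `v k + m`.
    have hiq' := abs_sub_le_socialCost_of_midpoint_le hy hi (j := q) (by linarith)
    have hql : |v q - (v k + m)| ≤ dA := by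
      rw [hq, abs_le]; constructor <;> linarith
    linarith [min_le_right |v i - v k| |v i - (v k + m)|, abs_sub_le (v i) (v q) (v k + m)]
  · have hik : |v i - v k| ≤ dA := by
      rw [abs_le]; constructor <;> linarith [ha.2 (mem_range_self i)]
    linarith [min_le_left |v i - v k| |v i - (v k + m)|]
  · have := abs_sub_le_socialCost_of_midpoint_le hy hi hk
    linarith [min_le_left |v i - v k| |v i - (v k + m)|]

end Reach

theorem socialCost_le_of_reach_le {v : ι → ℝ} {k : ι} {dA dB : ℝ}
    (ha : IsLeast (range v) (v k - dA)) (hb : IsGreatest (range v) (v k + dB)) (hAB : dA ≤ dB)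
    (y₁ y₂ : ℝ) :
    socialCost v (v k) (v k + max (2 * dA) dB) ≤
      (2 * Fintype.card ι - 1) * socialCost v y₁ y₂ := by
  wlog hy : y₁ ≤ y₂ generalizing y₁ y₂
  · rw [socialCost_comm v y₁]
    exact this y₂ y₁ (le_of_not_ge hy)
  have hC := socialCost_nonneg v y₁ y₂
  calc socialCost v (v k) (v k + max (2 * dA) dB)
      ≤ (Fintype.card ι - 1) * (2 * socialCost v y₁ y₂) :=
        sum_le_card_sub_one_mul k (by simp) (min_abs_sub_le_two_mul_socialCost ha hb hAB hy)
    _ ≤ (2 * Fintype.card ι - 1) * socialCost v y₁ y₂ := by linarith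

section ReachSup

variable (x : ι → ℝ) (k : ι)

lemma isGreatest_sSup_setOf_exists (P : ι → Prop) (f : ι → ℝ) (hk : P k) :
    IsGreatest {d | ∃ j, P j ∧ d = f j} (sSup {d | ∃ j, P j ∧ d = f j}) := by
  have hS : {d | ∃ j, P j ∧ d = f j}.Finite :=
    (finite_range f).subset (by rintro _ ⟨j, -, rfl⟩; exact ⟨j, rfl⟩)
  exact ⟨Set.Nonempty.csSup_mem ⟨f k, k, hk, rfl⟩ hS, fun _ hd => le_csSup hS.bddAbove hd⟩

lemma isLeast_range_sub_sSup :
    IsLeast (range x) (x k - sSup {d : ℝ | ∃ j, x j ≤ x k ∧ d = x k - x j}) := by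
  obtain ⟨⟨p, -, hp⟩, hle⟩ :=
    isGreatest_sSup_setOf_exists k (fun j => x j ≤ x k) (fun j => x k - x j) le_rfl
  refine ⟨⟨p, by rw [hp]; ring⟩, ?_⟩
  rintro _ ⟨j, rfl⟩
  rcases le_total (x j) (x k) with h | h
  · linarith [hle ⟨j, h, rfl⟩]
  · linarith [hle ⟨k, le_rfl, (sub_self _).symm⟩]

lemma isGreatest_range_add_sSup :
    IsGreatest (range x) (x k + sSup {d : ℝ | ∃ j, x k ≤ x j ∧ d = x j - x k}) := by
  obtain ⟨⟨q, -, hq⟩, hle⟩ :=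
    isGreatest_sSup_setOf_exists k (fun j => x k ≤ x j) (fun j => x j - x k) le_rfl
  refine ⟨⟨q, by rw [hq]; ring⟩, ?_⟩
  rintro _ ⟨j, rfl⟩
  rcases le_total (x k) (x j) with h | h
  · linarith [hle ⟨j, h, rfl⟩]
  · linarith [hle ⟨k, le_rfl, (sub_self _).symm⟩]

end ReachSup

theorem socialCost_alg4_le {n : ℕ} (k : Fin n) (v : Fin n → ℝ) (y₁ y₂ : ℝ) :
    socialCost v (alg4 k v).1 (alg4 k v).2 ≤ (2 * n - 1) * socialCost v y₁ y₂ := by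
  have ha := isLeast_range_sub_sSup v k
  have hb := isGreatest_range_add_sSup v k
  simp only [alg4]
  split_ifs with hAB
  · simpa using socialCost_le_of_reach_le ha hb hAB y₁ y₂
  · have hb' := hb.range_neg
    have ha' := ha.range_neg
    rw [neg_add', ← Pi.neg_apply] at hb'
    rw [neg_sub', sub_neg_eq_add, ← Pi.neg_apply] at ha'
    have := socialCost_le_of_reach_le hb' ha' (le_of_not_ge hAB) (-y₁) (-y₂)
    rw [socialCost_neg, Fintype.card_fin, Pi.neg_apply, max_comm, neg_add_eq_sub, ← neg_sub,
      socialCost_neg] at this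
    exact this

theorem alg4_robust_general (n : ℕ) (ihat : Fin n) (v : Fin n → ℝ) :
    (∑ i : Fin n, min |v i - (alg4 ihat v).1| |v i - (alg4 ihat v).2|) ≤
    (2 * (n : ℝ) - 1) *
      sInf {c : ℝ | ∃ y1 y2 : ℝ,
        c = ∑ i : Fin n, min |v i - y1| |v i - y2|} := by
  have hn : (1 : ℝ) ≤ n := by exact_mod_cast ihat.pos
  refine le_mul_csInf ⟨_, 0, 0, rfl⟩ (by linarith) ?_
  rintro _ ⟨y₁, y₂, rfl⟩
  exact socialCost_alg4_le ihat v y₁ y₂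

/-- Robustness of Algorithm 4 (part of Lemma 6.1): for every `n ≥ 2`,
every location profile `v` and every dictator `ihat`, the social cost of
the output of Algorithm 4 on the truthful profile is at most
`(2n - 1) · OPT(v)`. -/
theorem alg4_robust (n : ℕ) (hn : 2 ≤ n) (ihat : Fin n) (v : Fin n → ℝ) :
    (∑ i : Fin n, min |v i - (alg4 ihat v).1| |v i - (alg4 ihat v).2|) ≤
    (2 * (n : ℝ) - 1) *
      sInf {c : ℝ | ∃ y1 y2 : ℝ,
        c = ∑ i : Fin n, min |v i - y1| |v i - y2|} :=
  alg4_robust_general n ihat v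
end

section
/- (Lemma 6.2: consistency of Algorithm 4 with error-free predictions.) Let v be a location profile of n agents, and suppose there exists an optimal facility pair (l_hat_1, l_hat_2), a set S_1 of agents with |S_1| >= n/2, and an agent i_hat with v_{i_hat} = l_hat_1, such that OPT(v) equals the sum over i in S_1 of |v_i - l_hat_1| plus the sum over i not in S_1 of |v_i - l_hat_2|. Then the facility pair output by Algorithm 4 with dictator i_hat on the truthful report profile x = v has social cost at most (1 + n/2) * OPT(v). -/
/-!
Put the dictator at `0` and let `-d_A ≤ 0 ≤ d_B` be the extreme reports, say `d_A ≤ d_B`.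
Every agent's optimal cost is at most `OPT`, in particular the two extreme agents'. Comparing
these two costs with the position `t` of the second optimal facility shows that every agent `p`
is within `|p - t| + OPT` of `0` or of the second facility `max (2 d_A) d_B` of Algorithm 4.
The at least `n / 2` agents served by the dictator's facility in the optimum pay at most their
optimal cost; each of the at most `n / 2` others pays at most its optimal cost plus `OPT`.
-/

open Finset

theorem min_le_sum_add_sum_compl {ι M : Type*} [Fintype ι] [DecidableEq ι]
    [AddCommMonoid M] [LinearOrder M] [IsOrderedAddMonoid M]
    (S : Finset ι) {f g : ι → M} (hf : ∀ i, 0 ≤ f i) (hg : ∀ i, 0 ≤ g i) (j : ι) :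
    min (f j) (g j) ≤ ∑ i ∈ S, f i + ∑ i ∈ Sᶜ, g i := by
  by_cases hj : j ∈ S
  · calc min (f j) (g j) ≤ f j := min_le_left _ _
      _ ≤ ∑ i ∈ S, f i := single_le_sum (fun i _ => hf i) hj
      _ ≤ _ := le_add_of_nonneg_right (sum_nonneg fun i _ => hg i)
  · calc min (f j) (g j) ≤ g j := min_le_right _ _
      _ ≤ ∑ i ∈ Sᶜ, g i := single_le_sum (fun i _ => hg i) (mem_compl.mpr hj)
      _ ≤ _ := le_add_of_nonneg_left (sum_nonneg fun i _ => hf i)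

theorem sum_le_one_add_mul_of_le_add {ι : Type*} [Fintype ι] [DecidableEq ι]
    (S : Finset ι) {c f g : ι → ℝ} {k : ℝ} (hk : (Sᶜ.card : ℝ) ≤ k)
    (hC : 0 ≤ ∑ i ∈ S, f i + ∑ i ∈ Sᶜ, g i) (hf : ∀ i ∈ S, c i ≤ f i)
    (hg : ∀ i ∈ Sᶜ, c i ≤ g i + (∑ i ∈ S, f i + ∑ i ∈ Sᶜ, g i)) :
    ∑ i, c i ≤ (1 + k) * (∑ i ∈ S, f i + ∑ i ∈ Sᶜ, g i) := by
  set C := ∑ i ∈ S, f i + ∑ i ∈ Sᶜ, g i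
  calc ∑ i, c i = ∑ i ∈ S, c i + ∑ i ∈ Sᶜ, c i := (sum_add_sum_compl S c).symm
    _ ≤ ∑ i ∈ S, f i + ∑ i ∈ Sᶜ, (g i + C) := add_le_add (sum_le_sum hf) (sum_le_sum hg)
    _ = C + Sᶜ.card * C := by rw [sum_add_distrib, sum_const, nsmul_eq_mul]; ring
    _ ≤ (1 + k) * C := by nlinarith

theorem isGreatest_dists_left {ι : Type*} (x : ι → ℝ) {a : ι} (ha : ∀ j, x a ≤ x j)
    {l : ℝ} (hl : x a ≤ l) : IsGreatest {d : ℝ | ∃ j, x j ≤ l ∧ d = l - x j} (l - x a) :=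
  ⟨⟨a, hl, rfl⟩, by rintro d ⟨j, -, rfl⟩; linarith [ha j]⟩

theorem isGreatest_dists_right {ι : Type*} (x : ι → ℝ) {b : ι} (hb : ∀ j, x j ≤ x b)
    {l : ℝ} (hl : l ≤ x b) : IsGreatest {d : ℝ | ∃ j, l ≤ x j ∧ d = x j - l} (x b - l) :=
  ⟨⟨b, hl, rfl⟩, by rintro d ⟨j, -, rfl⟩; linarith [hb j]⟩

theorem alg4_eq {n : ℕ} (ihat : Fin n) (x : Fin n → ℝ) {a b : Fin n}
    (ha : ∀ j, x a ≤ x j) (hb : ∀ j, x j ≤ x b) :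
    alg4 ihat x =
      if x ihat - x a ≤ x b - x ihat
      then (x ihat, x ihat + max (2 * (x ihat - x a)) (x b - x ihat))
      else (x ihat, x ihat - max (x ihat - x a) (2 * (x b - x ihat))) := by
  simp only [alg4]
  rw [(isGreatest_dists_left x ha (ha ihat)).csSup_eq,
    (isGreatest_dists_right x hb (hb ihat)).csSup_eq]

theorem alg4_fst {n : ℕ} (ihat : Fin n) (x : Fin n → ℝ) : (alg4 ihat x).1 = x ihat := by
  simp only [alg4]
  split_ifs <;> rfl

theorem min_abs_sub_le_of_extremes_right {lo l hi t p O : ℝ} (hlo : lo ≤ p) (hhi : p ≤ hi)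
    (hl : lo ≤ l) (hfar : l - lo ≤ hi - l)
    (hOlo : min |lo - l| |lo - t| ≤ O) (hOhi : min |hi - l| |hi - t| ≤ O) :
    min |p - l| |p - (l + max (2 * (l - lo)) (hi - l))| ≤ |p - t| + O := by
  have hpt := abs_nonneg (p - t)
  rcases min_le_iff.mp hOhi with hhi_l | hhi_t
  · -- every agent is within `hi - l` of `l`
    rw [abs_of_nonneg (by linarith)] at hhi_l
    exact min_le_of_left_le (by rw [abs_le]; constructor <;> linarith)
  rw [abs_le] at hhi_t
  rcases min_le_iff.mp hOlo with hlo_l | hlo_t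
  · rw [abs_of_nonpos (by linarith), neg_sub] at hlo_l
    by_cases hnear : p ≤ l + (l - lo)
    · exact min_le_of_left_le (by rw [abs_le]; constructor <;> linarith)
    rcases le_total (hi - l) (2 * (l - lo)) with h | h
    · rw [max_eq_left h]
      exact min_le_of_right_le (by rw [abs_le]; constructor <;> linarith)
    · rw [max_eq_right h, add_sub_cancel]
      exact min_le_of_right_le
        (by linarith [abs_sub_le p t hi, abs_sub_comm t hi, abs_le.mpr hhi_t])
  · -- `t` is within `O` of both extremes, hence of `l`
    rw [abs_le] at hlo_t
    have htl : |t - l| ≤ O := abs_le.mpr ⟨by linarith, by linarith⟩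
    exact min_le_of_left_le (by linarith [abs_sub_le p t l])

theorem min_abs_sub_le_of_extremes_left {lo l hi t p O : ℝ} (hlo : lo ≤ p) (hhi : p ≤ hi)
    (hh : l ≤ hi) (hfar : hi - l ≤ l - lo)
    (hOlo : min |lo - l| |lo - t| ≤ O) (hOhi : min |hi - l| |hi - t| ≤ O) :
    min |p - l| |p - (l - max (l - lo) (2 * (hi - l)))| ≤ |p - t| + O := by
  have habs_neg_sub_neg (a b : ℝ) : |-a - -b| = |a - b| := by rw [neg_sub_neg, abs_sub_comm]
  have key := min_abs_sub_le_of_extremes_right (lo := -hi) (l := -l) (hi := -lo) (t := -t)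
    (p := -p) (O := O) (by linarith) (by linarith) (by linarith) (by linarith)
    (by rwa [habs_neg_sub_neg, habs_neg_sub_neg]) (by rwa [habs_neg_sub_neg, habs_neg_sub_neg])
  rwa [habs_neg_sub_neg, habs_neg_sub_neg, neg_sub_neg, neg_sub_neg, max_comm,
    show ∀ M, -p - (-l + M) = -(p - (l - M)) by intro; ring, abs_neg] at key

theorem min_abs_sub_alg4_le {n : ℕ} (ihat : Fin n) (x : Fin n → ℝ) {a b : Fin n}
    (ha : ∀ j, x a ≤ x j) (hb : ∀ j, x j ≤ x b) {t O : ℝ}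
    (hOa : min |x a - x ihat| |x a - t| ≤ O) (hOb : min |x b - x ihat| |x b - t| ≤ O)
    (i : Fin n) :
    min |x i - (alg4 ihat x).1| |x i - (alg4 ihat x).2| ≤ |x i - t| + O := by
  rw [alg4_eq ihat x ha hb]
  split_ifs with hfar
  · exact min_abs_sub_le_of_extremes_right (ha i) (hb i) (ha ihat) hfar hOa hOb
  · exact min_abs_sub_le_of_extremes_left (ha i) (hb i) (hb ihat) (not_le.mp hfar).le hOa hOb

/-- Lemma 6.2: consistency of Algorithm 4 with error-free predictions.  If
`(l̂₁, l̂₂)` is an optimal pair of facilities, agents in `S₁` (with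
`|S₁| ≥ n/2`) are served by `l̂₁` and the rest by `l̂₂`, and the dictator
`ihat` is located at `l̂₁`, then the output of Algorithm 4 on the truthful
profile has social cost at most `(1 + n/2) · OPT(v)`. -/
theorem alg4_consistent (n : ℕ) (v : Fin n → ℝ) (lh1 lh2 : ℝ)
    (S1 : Finset (Fin n)) (hS1 : (n : ℝ) / 2 ≤ S1.card)
    (ihat : Fin n) (hihat : v ihat = lh1)
    (hopt : sInf {c : ℝ | ∃ y1 y2 : ℝ,
        c = ∑ i : Fin n, min |v i - y1| |v i - y2|} =
      ∑ i ∈ S1, |v i - lh1| + ∑ i ∈ S1ᶜ, |v i - lh2|) :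
    (∑ i : Fin n, min |v i - (alg4 ihat v).1| |v i - (alg4 ihat v).2|) ≤
    (1 + (n : ℝ) / 2) *
      sInf {c : ℝ | ∃ y1 y2 : ℝ,
        c = ∑ i : Fin n, min |v i - y1| |v i - y2|} := by
  subst hihat
  rw [hopt]
  have hagent_le (j : Fin n) := min_le_sum_add_sum_compl S1
    (fun i => abs_nonneg (v i - v ihat)) (fun i => abs_nonneg (v i - lh2)) j
  have : Nonempty (Fin n) := ⟨ihat⟩
  obtain ⟨a, ha⟩ := Finite.exists_min v
  obtain ⟨b, hb⟩ := Finite.exists_max v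
  have hcompl : (S1ᶜ.card : ℝ) ≤ n / 2 := by
    rw [card_compl, Nat.cast_sub (card_le_univ S1), Fintype.card_fin]
    linarith
  refine sum_le_one_add_mul_of_le_add S1 hcompl (by positivity) (fun i _ => ?_) (fun i _ => ?_)
  · exact alg4_fst ihat v ▸ min_le_left _ _
  · exact min_abs_sub_alg4_le ihat v ha hb (hagent_le a) (hagent_le b) i
end
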